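/- Lipschitz continuity of smoothed robust value functions in the policy parameter: under Assumption 1, for every σ > 0, all θ₁, θ₂ ∈ Θ, and all s ∈ S, a ∈ A, |V_σ^{π_{θ₁}}(s) − V_σ^{π_{θ₂}}(s)| ≤ C_σ^V·‖θ₁ − θ₂‖ and |Q_σ^{π_{θ₁}}(s,a) − Q_σ^{π_{θ₂}}(s,a)| ≤ C_σ^V·‖θ₁ − θ₂‖. -/

import Mathlib

set_option autoImplicit false

open Finset

/-- Log-sum-exp: `LSE(σ, V) = (1/σ)·log (∑ s, exp (σ · V s))`. -/
noncomputable def lse {S : Type*} [Fintype S] (σ : ℝ) (V : S → ℝ) : ℝ :=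
  (1 / σ) * Real.log (∑ s, Real.exp (σ * V s))

/-!
Both Bellman operators involved are `γ`-contractions, since LSE is monotone and commutes with
adding constants. A bound `M` on `|V_σ^π|` therefore satisfies `M ≤ 1 + γM + γR·log|S|/σ`, which
bounds `|Q_σ^π|` by `C_σ`. Writing `V₁ - V₂ = ∑ₐ (π₁ - π₂) Q₁ + ∑ₐ π₂ (Q₁ - Q₂)`, the first sum
is at most `|A|·k_π·‖θ₁ - θ₂‖·C_σ` by the mean value theorem, and the second at most `γ`
times the sup-distance of `V₁` and `V₂`; solving this self-bound gives the claim for `V`, and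
one more contraction step gives it for `Q`.
-/

section LogSumExp

variable {S : Type*} [Fintype S] [Nonempty S] {σ : ℝ}

lemma sum_exp_mul_pos (σ : ℝ) (V : S → ℝ) : 0 < ∑ s, Real.exp (σ * V s) :=
  Finset.sum_pos (fun _ _ => Real.exp_pos _) univ_nonempty

lemma lse_mono (hσ : 0 ≤ σ) {V W : S → ℝ} (h : ∀ s, V s ≤ W s) : lse σ V ≤ lse σ W := by
  unfold lse
  gcongr
  exact h _

lemma lse_add_const (hσ : σ ≠ 0) (V : S → ℝ) (d : ℝ) :
    lse σ (fun s => V s + d) = lse σ V + d := by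
  have hsum : ∑ s, Real.exp (σ * (V s + d)) = (∑ s, Real.exp (σ * V s)) * Real.exp (σ * d) := by
    simp only [Finset.sum_mul, ← Real.exp_add, mul_add]
  unfold lse
  rw [hsum, Real.log_mul (sum_exp_mul_pos σ V).ne' (Real.exp_ne_zero _), Real.log_exp]
  field_simp

lemma lse_const (hσ : σ ≠ 0) (M : ℝ) :
    lse σ (fun _ : S => M) = M + Real.log (Fintype.card S) / σ := by
  have hcard : (Fintype.card S : ℝ) ≠ 0 := by exact_mod_cast Fintype.card_ne_zero
  unfold lse
  rw [Finset.sum_const, card_univ, nsmul_eq_mul, Real.log_mul hcard (Real.exp_ne_zero _),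
    Real.log_exp]
  field_simp
  ring

lemma le_lse (hσ : 0 < σ) (V : S → ℝ) (s : S) : V s ≤ lse σ V := by
  have hexp : Real.exp (σ * V s) ≤ ∑ t, Real.exp (σ * V t) :=
    Finset.single_le_sum (f := fun t => Real.exp (σ * V t)) (fun t _ => (Real.exp_pos _).le)
      (mem_univ s)
  have hlog : σ * V s ≤ Real.log (∑ t, Real.exp (σ * V t)) :=
    (Real.le_log_iff_exp_le (sum_exp_mul_pos σ V)).mpr hexp
  unfold lse
  rw [one_div, ← div_eq_inv_mul, le_div_iff₀ hσ]
  linarith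

lemma abs_lse_sub_le (hσ : 0 < σ) {V W : S → ℝ} {d : ℝ} (h : ∀ s, |V s - W s| ≤ d) :
    |lse σ V - lse σ W| ≤ d := by
  have hle : ∀ {V W : S → ℝ}, (∀ s, |V s - W s| ≤ d) → lse σ V ≤ lse σ W + d := fun h =>
    (lse_mono hσ.le fun s => by linarith [(abs_le.mp (h s)).2]).trans_eq (lse_add_const hσ.ne' _ d)
  rw [abs_sub_le_iff]
  constructor
  · linarith [hle h]
  · linarith [hle fun s => (abs_sub_comm (W s) (V s)).trans_le (h s)]

lemma abs_lse_le (hσ : 0 < σ) {V : S → ℝ} {M : ℝ} (h : ∀ s, |V s| ≤ M) :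
    |lse σ V| ≤ M + Real.log (Fintype.card S) / σ := by
  obtain ⟨s⟩ := ‹Nonempty S›
  have hL : 0 ≤ Real.log (Fintype.card S) / σ := div_nonneg (Real.log_natCast_nonneg _) hσ.le
  have hupper : lse σ V ≤ M + Real.log (Fintype.card S) / σ :=
    (lse_mono hσ.le fun s => (abs_le.mp (h s)).2).trans_eq (lse_const hσ.ne' M)
  have hlower : -M ≤ lse σ V := (abs_le.mp (h s)).1.trans (le_lse hσ V s)
  exact abs_le.mpr ⟨by linarith, hupper⟩

end LogSumExp

section Averages

variable {A : Type*} [Fintype A]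

lemma abs_sum_mul_le_of_mem_stdSimplex {w f : A → ℝ} {M : ℝ}
    (hw : w ∈ stdSimplex ℝ A) (hf : ∀ a, |f a| ≤ M) : |∑ a, w a * f a| ≤ M := by
  calc |∑ a, w a * f a| ≤ ∑ a, |w a * f a| := Finset.abs_sum_le_sum_abs _ _
    _ ≤ ∑ a, w a * M := Finset.sum_le_sum fun a _ => by
        rw [abs_mul, abs_of_nonneg (hw.1 a)]
        exact mul_le_mul_of_nonneg_left (hf a) (hw.1 a)
    _ = M := by rw [← Finset.sum_mul, hw.2, one_mul]

lemma abs_sum_mul_le_card_mul {u f : A → ℝ} {ε B : ℝ}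
    (hu : ∀ a, |u a| ≤ ε) (hf : ∀ a, |f a| ≤ B) :
    |∑ a, u a * f a| ≤ Fintype.card A * (ε * B) := by
  calc |∑ a, u a * f a| ≤ ∑ a, |u a * f a| := Finset.abs_sum_le_sum_abs _ _
    _ ≤ ∑ _a : A, ε * B := Finset.sum_le_sum fun a _ => by
        rw [abs_mul]
        exact mul_le_mul (hu a) (hf a) (abs_nonneg _) ((abs_nonneg _).trans (hu a))
    _ = Fintype.card A * (ε * B) := by rw [Finset.sum_const, card_univ, nsmul_eq_mul]

end Averages

lemma abs_le_div_one_sub_of_self_bound {S : Type*} [Fintype S] {f : S → ℝ} {b γ : ℝ}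
    (hγ : γ < 1) (h : ∀ M, (∀ s, |f s| ≤ M) → ∀ s, |f s| ≤ b + γ * M) (s : S) :
    |f s| ≤ b / (1 - γ) := by
  have : Nonempty S := ⟨s⟩
  set M := univ.sup' univ_nonempty fun s => |f s|
  have hM : ∀ s, |f s| ≤ M := fun s => le_sup' (fun s => |f s|) (mem_univ s)
  have hMb : M ≤ b + γ * M := Finset.sup'_le _ _ fun s _ => h M hM s
  rw [le_div_iff₀ (by linarith)]
  nlinarith [hM s]

lemma abs_sub_le_of_hasGradientWithinAt {E : Type*} [NormedAddCommGroup E]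
    [InnerProductSpace ℝ E] [CompleteSpace E] {Θ : Set E} (hΘ : Convex ℝ Θ) {f : E → ℝ}
    {f' : E → E} {C : ℝ} (hf : ∀ θ ∈ Θ, HasGradientWithinAt f (f' θ) Θ θ)
    (hf' : ∀ θ ∈ Θ, ‖f' θ‖ ≤ C) {θ₁ θ₂ : E} (h₁ : θ₁ ∈ Θ) (h₂ : θ₂ ∈ Θ) :
    |f θ₁ - f θ₂| ≤ C * ‖θ₁ - θ₂‖ := by
  simpa [Real.norm_eq_abs] using hΘ.norm_image_sub_le_of_norm_hasFDerivWithin_le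
    (fun θ hθ => (hf θ hθ).hasFDerivWithinAt)
    (fun θ hθ => by rw [LinearIsometryEquiv.norm_map]; exact hf' θ hθ) h₂ h₁

/-- `Q_σ^π = robustBackup c γ R p σ V_σ^π`: the policy enters `Q_σ^π` only through `V_σ^π`. -/
noncomputable def robustBackup {S A : Type*} [Fintype S] (c : S → A → ℝ) (γ R : ℝ)
    (p : S → A → S → ℝ) (σ : ℝ) (V : S → ℝ) (s : S) (a : A) : ℝ :=
  c s a + γ * (1 - R) * ∑ s', p s a s' * V s' + γ * R * lse σ V

section RobustBellman

variable {S A : Type*} [Fintype S] [Nonempty S]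
  {c : S → A → ℝ} {γ R : ℝ} {p : S → A → S → ℝ} {σ : ℝ}

lemma abs_robustBackup_le (hc : ∀ s a, c s a ∈ Set.Icc (0 : ℝ) 1) (hγ : 0 ≤ γ)
    (hR : R ∈ Set.Icc (0 : ℝ) 1) (hp : ∀ s a, p s a ∈ stdSimplex ℝ S) (hσ : 0 < σ)
    {V : S → ℝ} {M : ℝ} (hV : ∀ s, |V s| ≤ M) (s : S) (a : A) :
    |robustBackup c γ R p σ V s a| ≤ 1 + γ * M + γ * R * (Real.log (Fintype.card S) / σ) := by
  obtain ⟨hR0, hR1⟩ := hR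
  have hcost : |c s a| ≤ 1 := abs_le.mpr ⟨by linarith [(hc s a).1], (hc s a).2⟩
  have hnext : |γ * (1 - R) * ∑ s', p s a s' * V s'| ≤ γ * (1 - R) * M := by
    rw [abs_mul, abs_of_nonneg (by positivity : 0 ≤ γ * (1 - R))]
    exact mul_le_mul_of_nonneg_left (abs_sum_mul_le_of_mem_stdSimplex (hp s a) hV)
      (by positivity)
  have hlse : |γ * R * lse σ V| ≤ γ * R * (M + Real.log (Fintype.card S) / σ) := by
    rw [abs_mul, abs_of_nonneg (by positivity : 0 ≤ γ * R)]
    exact mul_le_mul_of_nonneg_left (abs_lse_le hσ hV) (by positivity)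
  unfold robustBackup
  linarith [abs_add_three (c s a) (γ * (1 - R) * ∑ s', p s a s' * V s') (γ * R * lse σ V)]

lemma abs_robustBackup_sub_le (hγ : 0 ≤ γ) (hR : R ∈ Set.Icc (0 : ℝ) 1)
    (hp : ∀ s a, p s a ∈ stdSimplex ℝ S) (hσ : 0 < σ) {V W : S → ℝ} {d : ℝ}
    (h : ∀ s, |V s - W s| ≤ d) (s : S) (a : A) :
    |robustBackup c γ R p σ V s a - robustBackup c γ R p σ W s a| ≤ γ * d := by
  obtain ⟨hR0, hR1⟩ := hR
  have hnext : |γ * (1 - R) * ∑ s', p s a s' * (V s' - W s')| ≤ γ * (1 - R) * d := by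
    rw [abs_mul, abs_of_nonneg (by positivity : 0 ≤ γ * (1 - R))]
    exact mul_le_mul_of_nonneg_left (abs_sum_mul_le_of_mem_stdSimplex (hp s a) h)
      (by positivity)
  have hlse : |γ * R * (lse σ V - lse σ W)| ≤ γ * R * d := by
    rw [abs_mul, abs_of_nonneg (by positivity : 0 ≤ γ * R)]
    exact mul_le_mul_of_nonneg_left (abs_lse_sub_le hσ h) (by positivity)
  have hsplit : robustBackup c γ R p σ V s a - robustBackup c γ R p σ W s a
      = γ * (1 - R) * ∑ s', p s a s' * (V s' - W s') + γ * R * (lse σ V - lse σ W) := by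
    simp only [robustBackup, mul_sub, Finset.sum_sub_distrib]
    ring
  rw [hsplit]
  linarith [abs_add_le (γ * (1 - R) * ∑ s', p s a s' * (V s' - W s'))
    (γ * R * (lse σ V - lse σ W))]

lemma abs_robustBackup_le_of_fixedPoint [Fintype A] (hc : ∀ s a, c s a ∈ Set.Icc (0 : ℝ) 1)
    (hγ : γ ∈ Set.Ico (0 : ℝ) 1) (hR : R ∈ Set.Icc (0 : ℝ) 1)
    (hp : ∀ s a, p s a ∈ stdSimplex ℝ S) (hσ : 0 < σ) {π : S → A → ℝ}
    (hπ : ∀ s, π s ∈ stdSimplex ℝ A) {V : S → ℝ}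
    (hV : ∀ s, V s = ∑ a, π s a * robustBackup c γ R p σ V s a) (s : S) (a : A) :
    |robustBackup c γ R p σ V s a|
      ≤ (1 + γ * R * (Real.log (Fintype.card S) / σ)) / (1 - γ) := by
  have hγ1 : 1 - γ ≠ 0 := by linarith [hγ.2]
  have hVbound : ∀ s, |V s| ≤ (1 + γ * R * (Real.log (Fintype.card S) / σ)) / (1 - γ) :=
    abs_le_div_one_sub_of_self_bound hγ.2 fun M hM s => by
      rw [hV s]
      exact (abs_sum_mul_le_of_mem_stdSimplex (hπ s)
        (abs_robustBackup_le hc hγ.1 hR hp hσ hM s)).trans_eq (by ring)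
  refine (abs_robustBackup_le hc hγ.1 hR hp hσ hVbound s a).trans_eq ?_
  field_simp
  ring

lemma abs_fixedPoint_sub_le [Fintype A] (hγ : γ ∈ Set.Ico (0 : ℝ) 1) (hR : R ∈ Set.Icc (0 : ℝ) 1)
    (hp : ∀ s a, p s a ∈ stdSimplex ℝ S) (hσ : 0 < σ) {π₁ π₂ : S → A → ℝ}
    (hπ₂ : ∀ s, π₂ s ∈ stdSimplex ℝ A) {V₁ V₂ : S → ℝ}
    (hV₁ : ∀ s, V₁ s = ∑ a, π₁ s a * robustBackup c γ R p σ V₁ s a)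
    (hV₂ : ∀ s, V₂ s = ∑ a, π₂ s a * robustBackup c γ R p σ V₂ s a)
    {ε B : ℝ} (hπ : ∀ s a, |π₁ s a - π₂ s a| ≤ ε)
    (hB : ∀ s a, |robustBackup c γ R p σ V₁ s a| ≤ B) (s : S) :
    |V₁ s - V₂ s| ≤ Fintype.card A * (ε * B) / (1 - γ) := by
  refine abs_le_div_one_sub_of_self_bound (f := fun s => V₁ s - V₂ s) hγ.2 (fun M hM s => ?_) s
  have hsplit : V₁ s - V₂ s = ∑ a, (π₁ s a - π₂ s a) * robustBackup c γ R p σ V₁ s a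
      + ∑ a, π₂ s a * (robustBackup c γ R p σ V₁ s a - robustBackup c γ R p σ V₂ s a) := by
    rw [hV₁ s, hV₂ s, ← Finset.sum_add_distrib, ← Finset.sum_sub_distrib]
    exact Finset.sum_congr rfl fun a _ => by ring
  rw [hsplit]
  exact (abs_add_le _ _).trans (add_le_add (abs_sum_mul_le_card_mul (hπ s) (hB s))
    (abs_sum_mul_le_of_mem_stdSimplex (hπ₂ s)
      (abs_robustBackup_sub_le hγ.1 hR hp hσ hM s)))

end RobustBellman

theorem stmt_14_general {S A : Type*} [Fintype S] [Fintype A] [Nonempty S] {N : ℕ}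
    (c : S → A → ℝ) (hc : ∀ s a, c s a ∈ Set.Icc (0 : ℝ) 1)
    (γ : ℝ) (hγ : γ ∈ Set.Ico (0 : ℝ) 1)
    (R : ℝ) (hR : R ∈ Set.Icc (0 : ℝ) 1)
    (p : S → A → S → ℝ) (hp : ∀ s a, p s a ∈ stdSimplex ℝ S)
    (σ : ℝ) (hσ : 0 < σ)
    (kπ : ℝ)
    (Cσ CσV : ℝ)
    (hCσ : Cσ = (1 / (1 - γ)) * (1 + 2 * γ * R * Real.log (Fintype.card S) / σ))
    (hCσV : CσV = Fintype.card A * kπ * Cσ / (1 - γ))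
    (Θ : Set (EuclideanSpace ℝ (Fin N))) (hΘ : Convex ℝ Θ)
    (π : EuclideanSpace ℝ (Fin N) → S → A → ℝ)
    (hπ : ∀ θ ∈ Θ, ∀ s, π θ s ∈ stdSimplex ℝ A)
    (D : EuclideanSpace ℝ (Fin N) → S → A → EuclideanSpace ℝ (Fin N))
    (hD : ∀ θ ∈ Θ, ∀ s a, HasGradientWithinAt (fun θ' => π θ' s a) (D θ s a) Θ θ)
    (hDb : ∀ θ ∈ Θ, ∀ s a, ‖D θ s a‖ ≤ kπ)
    (Vσ : EuclideanSpace ℝ (Fin N) → S → ℝ)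
    (hVσ : ∀ θ ∈ Θ, ∀ s, Vσ θ s = ∑ a, π θ s a * (c s a
      + γ * (1 - R) * ∑ s', p s a s' * Vσ θ s'
      + γ * R * lse σ (Vσ θ)))
    (Qσ : EuclideanSpace ℝ (Fin N) → S → A → ℝ)
    (hQσ : ∀ θ ∈ Θ, ∀ s a, Qσ θ s a = c s a + γ * (1 - R) * ∑ s', p s a s' * Vσ θ s'
      + γ * R * lse σ (Vσ θ))
    (θ₁ θ₂ : EuclideanSpace ℝ (Fin N)) (h₁ : θ₁ ∈ Θ) (h₂ : θ₂ ∈ Θ) :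
    (∀ s, |Vσ θ₁ s - Vσ θ₂ s| ≤ CσV * ‖θ₁ - θ₂‖) ∧
      (∀ s a, |Qσ θ₁ s a - Qσ θ₂ s a| ≤ CσV * ‖θ₁ - θ₂‖) := by
  have hfix : ∀ θ ∈ Θ, ∀ s, Vσ θ s = ∑ a, π θ s a * robustBackup c γ R p σ (Vσ θ) s a := hVσ
  have hQ : ∀ θ ∈ Θ, Qσ θ = robustBackup c γ R p σ (Vσ θ) := fun θ hθ =>
    funext₂ (hQσ θ hθ)
  have hπLip : ∀ s a, |π θ₁ s a - π θ₂ s a| ≤ kπ * ‖θ₁ - θ₂‖ := fun s a =>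
    abs_sub_le_of_hasGradientWithinAt hΘ (fun θ hθ => hD θ hθ s a) (fun θ hθ => hDb θ hθ s a)
      h₁ h₂
  have hQbound : ∀ s a, |robustBackup c γ R p σ (Vσ θ₁) s a| ≤ Cσ := fun s a => by
    refine (abs_robustBackup_le_of_fixedPoint hc hγ hR hp hσ (hπ θ₁ h₁) (hfix θ₁ h₁) s a).trans ?_
    have hγRL : 0 ≤ γ * R * (Real.log (Fintype.card S) / σ) :=
      mul_nonneg (mul_nonneg hγ.1 hR.1) (div_nonneg (Real.log_natCast_nonneg _) hσ.le)
    rw [hCσ, one_div_mul_eq_div]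
    gcongr
    · linarith [hγ.2]
    · rw [mul_div_assoc]
      linarith
  have hV : ∀ s, |Vσ θ₁ s - Vσ θ₂ s| ≤ CσV * ‖θ₁ - θ₂‖ := fun s =>
    (abs_fixedPoint_sub_le hγ hR hp hσ (hπ θ₂ h₂) (hfix θ₁ h₁) (hfix θ₂ h₂) hπLip hQbound
      s).trans_eq (by rw [hCσV]; ring)
  refine ⟨hV, fun s a => ?_⟩
  have hd : 0 ≤ CσV * ‖θ₁ - θ₂‖ := (abs_nonneg _).trans (hV s)
  rw [hQ θ₁ h₁, hQ θ₂ h₂]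
  exact (abs_robustBackup_sub_le hγ.1 hR hp hσ hV s a).trans
    (mul_le_of_le_one_left hd hγ.2.le)

/-- **Lipschitz continuity of the smoothed robust value functions in the policy parameter**:
under Assumption 1, for every `σ > 0` and all `θ₁, θ₂ ∈ Θ`, `s ∈ S`, `a ∈ A`,
`|V_σ^{π_{θ₁}}(s) - V_σ^{π_{θ₂}}(s)| ≤ C_σ^V·‖θ₁-θ₂‖` and
`|Q_σ^{π_{θ₁}}(s,a) - Q_σ^{π_{θ₂}}(s,a)| ≤ C_σ^V·‖θ₁-θ₂‖`, where
`C_σ^V = |A|·k_π·C_σ/(1-γ)` and `C_σ = (1/(1-γ))·(1 + 2γR·log|S|/σ)`. -/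
theorem stmt_14 {S A : Type*} [Fintype S] [Fintype A] [Nonempty S] [Nonempty A] {N : ℕ}
    (c : S → A → ℝ) (hc : ∀ s a, c s a ∈ Set.Icc (0 : ℝ) 1)
    (γ : ℝ) (hγ : γ ∈ Set.Ico (0 : ℝ) 1)
    (R : ℝ) (hR : R ∈ Set.Icc (0 : ℝ) 1)
    (p : S → A → S → ℝ) (hp : ∀ s a, p s a ∈ stdSimplex ℝ S)
    (σ : ℝ) (hσ : 0 < σ)
    (kπ : ℝ) (hkπ : 0 < kπ)
    (Cσ CσV : ℝ)
    (hCσ : Cσ = (1 / (1 - γ)) * (1 + 2 * γ * R * Real.log (Fintype.card S) / σ))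
    (hCσV : CσV = Fintype.card A * kπ * Cσ / (1 - γ))
    (Θ : Set (EuclideanSpace ℝ (Fin N))) (hΘ : Convex ℝ Θ)
    (π : EuclideanSpace ℝ (Fin N) → S → A → ℝ)
    (hπ : ∀ θ ∈ Θ, ∀ s, π θ s ∈ stdSimplex ℝ A)
    (D : EuclideanSpace ℝ (Fin N) → S → A → EuclideanSpace ℝ (Fin N))
    (hD : ∀ θ ∈ Θ, ∀ s a, HasGradientWithinAt (fun θ' => π θ' s a) (D θ s a) Θ θ)
    (hDb : ∀ θ ∈ Θ, ∀ s a, ‖D θ s a‖ ≤ kπ)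
    (Vσ : EuclideanSpace ℝ (Fin N) → S → ℝ)
    (hVσ : ∀ θ ∈ Θ, ∀ s, Vσ θ s = ∑ a, π θ s a * (c s a
      + γ * (1 - R) * ∑ s', p s a s' * Vσ θ s'
      + γ * R * lse σ (Vσ θ)))
    (Qσ : EuclideanSpace ℝ (Fin N) → S → A → ℝ)
    (hQσ : ∀ θ ∈ Θ, ∀ s a, Qσ θ s a = c s a + γ * (1 - R) * ∑ s', p s a s' * Vσ θ s'
      + γ * R * lse σ (Vσ θ))
    (θ₁ θ₂ : EuclideanSpace ℝ (Fin N)) (h₁ : θ₁ ∈ Θ) (h₂ : θ₂ ∈ Θ) :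
    (∀ s, |Vσ θ₁ s - Vσ θ₂ s| ≤ CσV * ‖θ₁ - θ₂‖) ∧
      (∀ s a, |Qσ θ₁ s a - Qσ θ₂ s a| ≤ CσV * ‖θ₁ - θ₂‖) :=
  stmt_14_general c hc γ hγ R hR p hp σ hσ kπ Cσ CσV hCσ hCσV Θ hΘ π hπ D hD hDb Vσ hVσ Qσ hQσ θ₁ θ₂
    h₁ h₂
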